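/- Let G be a standard real Gaussian random variable, and let Ξ > 0, ρ > 0 and b > 0. Set u = 2ρb/Ξ and R = 2Q(u). Then E[ min_{|x| ≤ b} (ΞG·x + ρx²) ] = Rρb² − (1 − R)·Ξ²/(4ρ) − (bΞ/√(2π))·exp(−u²/2). -/

import Mathlib

/-!
Completing the square, the minimum of `c x + ρ x²` over `[-b, b]` is
`((|c| - 2ρb)₊² - c²) / (4ρ)`. With `c = Ξ G` and `u = 2ρb/Ξ` this is
`Ξ²/(4ρ) · ((G - u)₊² + (-G - u)₊² - G²)`. Since `G` and `-G` have the same law and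
`E[G²] = 1`, everything reduces to the stop-loss moment
`E[(G - u)₊²] = (1 + u²) Q(u) - u φ(u)`, which follows from the antiderivative
`-(x - 2u) φ(x)` of `((x - u)² - 1 - u²) φ(x)`.
-/

open MeasureTheory ProbabilityTheory

/-- Gaussian tail probability `Q(t) = P(G > t)` for a standard Gaussian `G`. -/
noncomputable def gaussQ (t : ℝ) : ℝ := (gaussianReal 0 1 {x | t < x}).toReal

open Real Set Filter Topology

theorem isLeast_image_mul_add_sq_Icc {c ρ b : ℝ} (hρ : 0 < ρ) (hb : 0 ≤ b) :
    IsLeast ((fun x => c * x + ρ * x ^ 2) '' Icc (-b) b)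
      ((max (|c| - 2 * ρ * b) 0 ^ 2 - c ^ 2) / (4 * ρ)) := by
  refine ⟨?_, ?_⟩
  -- the minimiser is `-c / (2ρ)` clamped to `[-b, b]`
  · rcases le_or_gt |c| (2 * ρ * b) with hc | hc
    · obtain ⟨hc₁, hc₂⟩ := abs_le.1 hc
      refine ⟨-c / (2 * ρ), ⟨?_, ?_⟩, ?_⟩
      · rw [le_div_iff₀ (by positivity)]; linarith
      · rw [div_le_iff₀ (by positivity)]; linarith
      · rw [max_eq_right (by linarith)]; field_simp; ring
    · rcases le_or_gt 0 c with hc₀ | hc₀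
      · rw [abs_of_nonneg hc₀] at hc
        refine ⟨-b, ⟨le_rfl, by linarith⟩, ?_⟩
        rw [abs_of_nonneg hc₀, max_eq_left (by linarith)]; field_simp; ring
      · rw [abs_of_neg hc₀] at hc
        refine ⟨b, ⟨by linarith, le_rfl⟩, ?_⟩
        rw [abs_of_neg hc₀, max_eq_left (by linarith)]; field_simp; ring
  · rintro _ ⟨x, ⟨hx₁, hx₂⟩, rfl⟩
    -- completing the square, `|2ρx + c| ≥ |c| - 2ρ|x|`
    have hsq : 4 * ρ * (c * x + ρ * x ^ 2) + c ^ 2 = (2 * ρ * x + c) ^ 2 := by ring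
    have hlow : max (|c| - 2 * ρ * b) 0 ≤ |2 * ρ * x + c| := by
      refine max_le ?_ (abs_nonneg _)
      have := abs_sub_abs_le_abs_sub c (-(2 * ρ * x))
      rw [sub_neg_eq_add, add_comm, abs_neg, abs_mul,
        abs_of_pos (by positivity : 0 < 2 * ρ)] at this
      nlinarith [abs_le.2 ⟨hx₁, hx₂⟩]
    rw [div_le_iff₀ (by positivity)]
    nlinarith [pow_le_pow_left₀ (le_max_right _ _) hlow 2, sq_abs (2 * ρ * x + c)]

lemma max_abs_sub_zero_sq {u : ℝ} (hu : 0 ≤ u) (x : ℝ) :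
    max (|x| - u) 0 ^ 2 = max (x - u) 0 ^ 2 + max (-x - u) 0 ^ 2 := by
  rcases le_total 0 x with hx | hx
  · rw [abs_of_nonneg hx, max_eq_right (a := -x - u) (by linarith)]; ring
  · rw [abs_of_nonpos hx, max_eq_right (a := x - u) (by linarith)]; ring

section StandardGaussianDensity

local notation "φ" => gaussianPDFReal 0 1

lemma gaussianPDFReal_zero_one (x : ℝ) : φ x = exp (-x ^ 2 / 2) / √(2 * π) := by
  simp [gaussianPDFReal, div_eq_inv_mul]

lemma hasDerivAt_gaussianPDFReal_zero_one (x : ℝ) : HasDerivAt φ (-x * φ x) x := by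
  have h : HasDerivAt (fun y : ℝ => -y ^ 2 / 2) (-x) x :=
    ((hasDerivAt_pow 2 x).neg.div_const 2).congr_deriv (by push_cast; ring)
  rw [funext gaussianPDFReal_zero_one]
  exact (h.exp.div_const _).congr_deriv (by beta_reduce; ring)

lemma integrable_pow_mul_gaussianPDFReal_zero_one (n : ℕ) :
    Integrable fun x => x ^ n * φ x := by
  refine ((integrable_rpow_mul_exp_neg_mul_sq (b := 1 / 2) (by norm_num)
    (neg_one_lt_zero.trans_le n.cast_nonneg)).div_const √(2 * π)).congr (.of_forall fun x => ?_)
  simp only [rpow_natCast, gaussianPDFReal_zero_one]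
  ring_nf

lemma tendsto_pow_mul_gaussianPDFReal_zero_one (n : ℕ) :
    Tendsto (fun x => x ^ n * φ x) atTop (𝓝 0) := by
  have h := ((tendsto_rpow_abs_mul_exp_neg_mul_sq_cocompact (a := 1 / 2) (by norm_num) n).mono_left
    atTop_le_cocompact).div_const √(2 * π)
  rw [zero_div] at h
  refine tendsto_zero_iff_norm_tendsto_zero.2 (h.congr fun x => ?_)
  rw [norm_mul, norm_pow, Real.norm_eq_abs, Real.norm_of_nonneg (gaussianPDFReal_nonneg _ _ _),
    gaussianPDFReal_zero_one, rpow_natCast]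
  ring_nf

lemma gaussQ_eq_integral (t : ℝ) : gaussQ t = ∫ x in Ioi t, φ x := by
  rw [gaussQ, gaussianReal_apply_eq_integral 0 one_ne_zero]
  exact ENNReal.toReal_ofReal
    (setIntegral_nonneg measurableSet_Ioi fun x _ => gaussianPDFReal_nonneg _ _ x)

lemma integral_Ioi_sub_sq_mul_gaussianPDFReal (u : ℝ) :
    ∫ x in Ioi u, (x - u) ^ 2 * φ x = (1 + u ^ 2) * gaussQ u - u * φ u := by
  have hderiv : ∀ x ∈ Ici u, HasDerivAt (fun x => -(x - 2 * u) * φ x)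
      ((x - u) ^ 2 * φ x - (1 + u ^ 2) * φ x) x := fun x _ =>
    (((hasDerivAt_id' x).sub_const (2 * u)).neg.mul
      (hasDerivAt_gaussianPDFReal_zero_one x)).congr_deriv (by simp only [Pi.neg_apply]; ring)
  have hint : Integrable fun x => (x - u) ^ 2 * φ x := by
    refine (((integrable_pow_mul_gaussianPDFReal_zero_one 2).sub
      ((integrable_pow_mul_gaussianPDFReal_zero_one 1).const_mul (2 * u))).add
      ((integrable_pow_mul_gaussianPDFReal_zero_one 0).const_mul (u ^ 2))).congr
      (.of_forall fun x => ?_)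
    simp only [Pi.add_apply, Pi.sub_apply]
    ring
  have hφ : Integrable fun x => (1 + u ^ 2) * φ x :=
    (integrable_gaussianPDFReal 0 1).const_mul _
  have hlim : Tendsto (fun x => -(x - 2 * u) * φ x) atTop (𝓝 0) := by
    convert ((tendsto_pow_mul_gaussianPDFReal_zero_one 0).const_mul (2 * u)).sub
      (tendsto_pow_mul_gaussianPDFReal_zero_one 1) using 2
      <;> ring
  have h := integral_Ioi_of_hasDerivAt_of_tendsto' hderiv (hint.sub hφ).integrableOn hlim
  rw [integral_sub hint.integrableOn hφ.integrableOn, integral_const_mul,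
    ← gaussQ_eq_integral] at h
  linarith

lemma integral_max_sub_sq_gaussianReal (u : ℝ) :
    ∫ x, max (x - u) 0 ^ 2 ∂gaussianReal 0 1 = (1 + u ^ 2) * gaussQ u - u * φ u := by
  rw [integral_gaussianReal_eq_integral_smul one_ne_zero,
    ← integral_Ioi_sub_sq_mul_gaussianPDFReal, ← integral_indicator measurableSet_Ioi]
  congr 1 with x
  by_cases hx : u < x
  · simp [indicator_of_mem (mem_Ioi.2 hx), max_eq_left (sub_nonneg.2 hx.le), mul_comm]
  · rw [indicator_of_notMem (by exact hx), max_eq_right (by linarith : x - u ≤ 0)]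
    simp

end StandardGaussianDensity

lemma integral_sq_gaussianReal (μ : ℝ) (v : NNReal) :
    ∫ x, x ^ 2 ∂gaussianReal μ v = μ ^ 2 + v := by
  have h := variance_eq_sub (memLp_id_gaussianReal (μ := μ) (v := v) 2)
  rw [variance_id_gaussianReal] at h
  simp only [Pi.pow_apply, id_eq, integral_id_gaussianReal] at h
  linarith

lemma integral_comp_neg_gaussianReal (v : NNReal) (f : ℝ → ℝ) :
    ∫ x, f (-x) ∂gaussianReal 0 v = ∫ x, f x ∂gaussianReal 0 v := by
  conv_rhs => rw [← neg_zero, ← gaussianReal_map_neg]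
  exact (measurableEmbedding_neg.integral_map f).symm

lemma MeasureTheory.MemLp.integrable_max_zero_sq {α : Type*} {m : MeasurableSpace α}
    {μ : Measure α} {f : α → ℝ} (hf : MemLp f 2 μ) :
    Integrable (fun x => max (f x) 0 ^ 2) μ := by
  refine hf.integrable_sq.mono'
    ((hf.1.aemeasurable.max aemeasurable_const).pow_const 2).aestronglyMeasurable
    (.of_forall fun x => ?_)
  rw [Real.norm_of_nonneg (sq_nonneg _), ← sq_abs (f x)]
  exact pow_le_pow_left₀ (le_max_right _ _) (max_le (le_abs_self _) (abs_nonneg _)) 2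

theorem stmt15 (Ξ ρ b : ℝ) (hΞ : 0 < Ξ) (hρ : 0 < ρ) (hb : 0 < b) :
    ∫ g : ℝ, sInf ((fun x : ℝ => Ξ * g * x + ρ * x ^ 2) '' Set.Icc (-b) b)
        ∂(gaussianReal 0 1)
      = (2 * gaussQ (2 * ρ * b / Ξ)) * ρ * b ^ 2
        - (1 - 2 * gaussQ (2 * ρ * b / Ξ)) * Ξ ^ 2 / (4 * ρ)
        - (b * Ξ / Real.sqrt (2 * Real.pi)) * Real.exp (-(2 * ρ * b / Ξ) ^ 2 / 2) := by
  set u := 2 * ρ * b / Ξ with hu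
  have hmin : ∀ g : ℝ, sInf ((fun x : ℝ => Ξ * g * x + ρ * x ^ 2) '' Set.Icc (-b) b) =
      Ξ ^ 2 / (4 * ρ) * (max (g - u) 0 ^ 2 + max (-g - u) 0 ^ 2 - g ^ 2) := fun g => by
    have hscale : max (|Ξ * g| - 2 * ρ * b) 0 = Ξ * max (|g| - u) 0 := by
      rw [mul_max_of_nonneg _ _ hΞ.le, mul_zero, abs_mul, abs_of_pos hΞ, hu]
      field_simp
    rw [(isLeast_image_mul_add_sq_Icc hρ hb.le).csInf_eq, hscale, mul_pow,
      max_abs_sub_zero_sq (by positivity)]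
    ring
  have hid := memLp_id_gaussianReal (μ := 0) (v := 1) 2
  have hpos : Integrable (fun g => max (g - u) 0 ^ 2) (gaussianReal 0 1) :=
    (hid.sub (memLp_const u)).integrable_max_zero_sq
  have hneg : Integrable (fun g => max (-g - u) 0 ^ 2) (gaussianReal 0 1) :=
    (hid.neg.sub (memLp_const u)).integrable_max_zero_sq
  have hsq : Integrable (fun g : ℝ => g ^ 2) (gaussianReal 0 1) := hid.integrable_sq
  simp_rw [hmin]
  rw [integral_const_mul, integral_sub (hpos.fun_add hneg) hsq,
    integral_add hpos hneg, integral_comp_neg_gaussianReal 1 (fun g => max (g - u) 0 ^ 2),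
    integral_max_sub_sq_gaussianReal, integral_sq_gaussianReal, gaussianPDFReal_zero_one,
    NNReal.coe_one, hu]
  field_simp
  ring
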